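/- There exists N such that for every n ≥ N the following holds: if G is a graph maximizing the Q-spread s_Q among all connected graphs on n vertices and x is a positive unit eigenvector of Q(G) for q1(G), then the set T := {v ∈ V(G) : x_v < 1/(2√n)} has fewer than 8 elements. -/

import Mathlib

/-- The adjacency matrix of a simple graph on `Fin n`, over `ℝ`. -/
noncomputable def adjMat {n : ℕ} (G : SimpleGraph (Fin n)) : Matrix (Fin n) (Fin n) ℝ :=
  letI : DecidableRel G.Adj := Classical.decRel _
  G.adjMatrix ℝ

/-- The set of eigenvalues of a real square matrix. -/
def eigSet {n : ℕ} (M : Matrix (Fin n) (Fin n) ℝ) : Set ℝ :=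
  {mu : ℝ | ∃ x : Fin n → ℝ, x ≠ 0 ∧ M.mulVec x = mu • x}

/-- The largest eigenvalue of a real square matrix. -/
noncomputable def lamMax {n : ℕ} (M : Matrix (Fin n) (Fin n) ℝ) : ℝ := sSup (eigSet M)

/-- The least eigenvalue of a real square matrix. -/
noncomputable def lamMin {n : ℕ} (M : Matrix (Fin n) (Fin n) ℝ) : ℝ := sInf (eigSet M)

/-- `λ₁(G)`: the largest adjacency eigenvalue of `G`. -/
noncomputable def lam1 {n : ℕ} (G : SimpleGraph (Fin n)) : ℝ := lamMax (adjMat G)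

/-- The degree of a vertex. -/
noncomputable def deg {n : ℕ} (G : SimpleGraph (Fin n)) (v : Fin n) : ℕ :=
  Nat.card {u : Fin n // G.Adj v u}

/-- The signless Laplacian `Q(G) = D(G) + A(G)`. -/
noncomputable def signlessLap {n : ℕ} (G : SimpleGraph (Fin n)) : Matrix (Fin n) (Fin n) ℝ :=
  Matrix.diagonal (fun v => (deg G v : ℝ)) + adjMat G

/-- `q₁(G)`: the largest signless Laplacian eigenvalue. -/
noncomputable def q1 {n : ℕ} (G : SimpleGraph (Fin n)) : ℝ := lamMax (signlessLap G)

/-- `qₙ(G)`: the least signless Laplacian eigenvalue. -/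
noncomputable def qmin {n : ℕ} (G : SimpleGraph (Fin n)) : ℝ := lamMin (signlessLap G)

/-- The `Q`-spread `s_Q(G) = q₁(G) - qₙ(G)`. -/
noncomputable def sQ {n : ℕ} (G : SimpleGraph (Fin n)) : ℝ := q1 G - qmin G

/-- The complete split graph `CS_{n,ω}`: a clique on the first `ω` vertices, completely
joined to an independent set on the remaining `n - ω` vertices. -/
def CS (n w : ℕ) : SimpleGraph (Fin n) where
  Adj u v := u ≠ v ∧ ((u : ℕ) < w ∨ (v : ℕ) < w)
  symm := ⟨by intro u v h; exact ⟨h.1.symm, h.2.symm⟩⟩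
  loopless := ⟨by intro u h; exact h.1 rfl⟩

/-- `K_{n-1}^+`: the complete graph on the first `n-1` vertices together with a pendant
vertex (the last vertex) joined to exactly one clique vertex (vertex `0`). -/
def KPlus (n : ℕ) : SimpleGraph (Fin n) where
  Adj u v := u ≠ v ∧ (((u : ℕ) < n - 1 ∧ (v : ℕ) < n - 1) ∨ (u : ℕ) = 0 ∨ (v : ℕ) = 0)
  symm := ⟨by intro u v h; refine ⟨h.1.symm, ?_⟩; tauto⟩
  loopless := ⟨by intro u h; exact h.1 rfl⟩

/-!
Comparing with `K_{n-1}^+` gives `q₁(G) ≥ 2n - 5` for a spread maximiser `G`: the Rayleigh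
quotients of the clique indicator and of the pendant vertex give `q₁(K_{n-1}^+) ≥ 2n - 4` and
`qₙ(K_{n-1}^+) ≤ 1`, while `qₙ(G) ≥ 0`. At a vertex `v` of degree `d` the eigen-equation reads
`(q₁ - d) x_v = ∑_{u ∼ v} x_u`, so Cauchy–Schwarz gives `(n - 4)² x_v² ≤ (n - 1)(1 - x_v²)`, i.e.
`x_v² ≤ (n - 1)/(n² - 7n + 15)` for every `v`. If `t` entries were below `1/(2√n)`, the total
mass would be at most `t/(4n) + (n - t)(n - 1)/(n² - 7n + 15)`, which is `< 1` as soon as `t ≥ 8`.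
-/

open Matrix Finset

namespace Matrix.IsHermitian

variable {ι : Type*} [Fintype ι] [DecidableEq ι] {M : Matrix ι ι ℝ}

theorem dotProduct_eigenvectorBasis_mulVec (hM : M.IsHermitian) (i : ι) (y : ι → ℝ) :
    ⇑(hM.eigenvectorBasis i) ⬝ᵥ (M *ᵥ y) = hM.eigenvalues i * (⇑(hM.eigenvectorBasis i) ⬝ᵥ y) := by
  rw [dotProduct_mulVec, ← mulVec_transpose, ← conjTranspose_eq_transpose_of_trivial, hM.eq,
    hM.mulVec_eigenvectorBasis, smul_dotProduct, smul_eq_mul]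

theorem dotProduct_eq_sum_eigenvectorBasis (hM : M.IsHermitian) (y z : ι → ℝ) :
    y ⬝ᵥ z = ∑ i, (⇑(hM.eigenvectorBasis i) ⬝ᵥ y) * (⇑(hM.eigenvectorBasis i) ⬝ᵥ z) := by
  have := hM.eigenvectorBasis.sum_inner_mul_inner (WithLp.toLp 2 z) (WithLp.toLp 2 y)
  simp only [EuclideanSpace.inner_eq_star_dotProduct, star_trivial] at this
  rw [← this]
  exact sum_congr rfl fun i _ => by rw [mul_comm, dotProduct_comm y]

theorem dotProduct_mulVec_le_sup'_eigenvalues [Nonempty ι] (hM : M.IsHermitian) (y : ι → ℝ) :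
    y ⬝ᵥ (M *ᵥ y) ≤ univ.sup' univ_nonempty hM.eigenvalues * (y ⬝ᵥ y) := by
  rw [hM.dotProduct_eq_sum_eigenvectorBasis y (M *ᵥ y), hM.dotProduct_eq_sum_eigenvectorBasis y y,
    mul_sum]
  refine sum_le_sum fun i _ => ?_
  rw [dotProduct_eigenvectorBasis_mulVec, ← mul_assoc, mul_comm _ (hM.eigenvalues i), mul_assoc]
  exact mul_le_mul_of_nonneg_right (le_sup' _ (mem_univ i)) (mul_self_nonneg _)

end Matrix.IsHermitian

section ExtremeEigenvalues

variable {n : ℕ} {M : Matrix (Fin n) (Fin n) ℝ}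

lemma exists_mul_dotProduct_self_eq_of_mem_eigSet {μ : ℝ} (hμ : μ ∈ eigSet M) :
    ∃ x : Fin n → ℝ, 0 < x ⬝ᵥ x ∧ μ * (x ⬝ᵥ x) = x ⬝ᵥ (M *ᵥ x) := by
  obtain ⟨x, hx0, hx⟩ := hμ
  refine ⟨x, by simpa using dotProduct_star_self_pos_iff.mpr hx0, ?_⟩
  rw [hx, dotProduct_smul, smul_eq_mul]

lemma Matrix.IsHermitian.isGreatest_eigSet [NeZero n] (hM : M.IsHermitian) :
    IsGreatest (eigSet M) (univ.sup' univ_nonempty hM.eigenvalues) := by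
  refine ⟨?_, fun μ hμ => ?_⟩
  · obtain ⟨i, -, hi⟩ := exists_mem_eq_sup' univ_nonempty hM.eigenvalues
    rw [hi]
    exact ⟨_, fun h => hM.eigenvectorBasis.orthonormal.ne_zero i (by simpa using h),
      hM.mulVec_eigenvectorBasis i⟩
  · obtain ⟨x, hx0, hx⟩ := exists_mul_dotProduct_self_eq_of_mem_eigSet hμ
    exact le_of_mul_le_mul_right (hx ▸ hM.dotProduct_mulVec_le_sup'_eigenvalues x) hx0

lemma dotProduct_mulVec_le_lamMax [NeZero n] (hM : M.IsHermitian) (y : Fin n → ℝ) :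
    y ⬝ᵥ (M *ᵥ y) ≤ lamMax M * (y ⬝ᵥ y) := by
  rw [lamMax, hM.isGreatest_eigSet.csSup_eq]
  exact hM.dotProduct_mulVec_le_sup'_eigenvalues y

lemma eigSet_neg : eigSet (-M) = -eigSet M := by
  ext μ
  simp only [eigSet, Set.mem_neg, Set.mem_ofPred_eq, neg_mulVec, neg_smul, neg_eq_iff_eq_neg]

lemma lamMin_eq_neg_lamMax_neg : lamMin M = -lamMax (-M) := by
  rw [lamMin, Real.sInf_def, lamMax, eigSet_neg]

lemma lamMin_mul_le_dotProduct_mulVec [NeZero n] (hM : M.IsHermitian) (y : Fin n → ℝ) :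
    lamMin M * (y ⬝ᵥ y) ≤ y ⬝ᵥ (M *ᵥ y) := by
  have h := dotProduct_mulVec_le_lamMax hM.neg y
  rw [neg_mulVec, dotProduct_neg] at h
  rw [lamMin_eq_neg_lamMax_neg]
  linarith

end ExtremeEigenvalues

section SignlessLaplacian

variable {n : ℕ} (G : SimpleGraph (Fin n))

lemma deg_eq_degree [DecidableRel G.Adj] (v : Fin n) : deg G v = G.degree v := by
  rw [deg, ← SimpleGraph.card_neighborSet_eq_degree, Nat.card_eq_fintype_card]
  exact Fintype.card_congr' rfl

lemma signlessLap_eq_degMatrix_add_adjMatrix [DecidableRel G.Adj] :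
    signlessLap G = G.degMatrix ℝ + G.adjMatrix ℝ := by
  ext u v
  simp [signlessLap, adjMat, SimpleGraph.degMatrix, deg_eq_degree]

lemma signlessLap_mulVec_apply [DecidableRel G.Adj] (x : Fin n → ℝ) (v : Fin n) :
    (signlessLap G *ᵥ x) v = G.degree v * x v + ∑ u ∈ G.neighborFinset v, x u := by
  rw [signlessLap_eq_degMatrix_add_adjMatrix, add_mulVec, Pi.add_apply,
    SimpleGraph.degMatrix_mulVec_apply, SimpleGraph.adjMatrix_mulVec_apply]

lemma dotProduct_signlessLap_mulVec [DecidableRel G.Adj] (x : Fin n → ℝ) :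
    x ⬝ᵥ (signlessLap G *ᵥ x) = (∑ i, ∑ j, if G.Adj i j then (x i + x j) ^ 2 else 0) / 2 := by
  simp_rw [signlessLap_eq_degMatrix_add_adjMatrix, add_mulVec, dotProduct_add,
    SimpleGraph.dotProduct_mulVec_degMatrix, SimpleGraph.dotProduct_mulVec_adjMatrix,
    SimpleGraph.degree_eq_sum_if_adj, sum_mul, ite_mul, one_mul, zero_mul, ← sum_add_distrib,
    ite_add_ite, add_zero]
  rw [← add_self_div_two (∑ i, ∑ j, _)]
  conv_lhs => enter [1, 2, 2, i, 2, j]; rw [if_congr (G.adj_comm i j) rfl rfl]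
  conv_lhs => enter [1, 2]; rw [sum_comm]
  simp_rw [← sum_add_distrib, ite_add_ite]
  congr 2 with i
  congr 2 with j
  ring_nf

lemma posSemidef_signlessLap : (signlessLap G).PosSemidef := by
  classical
  refine .of_dotProduct_mulVec_nonneg ?_ fun x => ?_
  · rw [signlessLap_eq_degMatrix_add_adjMatrix]
    exact (G.isHermitian_degMatrix ℝ).add (G.isHermitian_adjMatrix ℝ)
  · rw [star_trivial, dotProduct_signlessLap_mulVec]
    positivity

lemma qmin_nonneg : 0 ≤ qmin G := by
  refine Real.sInf_nonneg fun μ hμ => ?_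
  obtain ⟨x, hx0, hx⟩ := exists_mul_dotProduct_self_eq_of_mem_eigSet hμ
  have hQ : 0 ≤ x ⬝ᵥ (signlessLap G *ᵥ x) := by
    simpa using (posSemidef_signlessLap G).dotProduct_mulVec_nonneg x
  exact nonneg_of_mul_nonneg_left (hx ▸ hQ) hx0

end SignlessLaplacian

section KPlus

instance instDecidableRelAdjKPlus (n : ℕ) : DecidableRel (KPlus n).Adj :=
  fun _ _ => inferInstanceAs (Decidable (_ ∧ _))

lemma KPlus_connected {n : ℕ} [NeZero n] : (KPlus n).Connected := by
  refine SimpleGraph.connected_iff_exists_forall_reachable _ |>.mpr ⟨0, fun w => ?_⟩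
  rcases eq_or_ne 0 w with rfl | hw
  · rfl
  · exact SimpleGraph.Adj.reachable ⟨hw, Or.inr (Or.inl rfl)⟩

variable (m : ℕ)

lemma two_mul_le_q1_KPlus : 2 * (m : ℝ) ≤ q1 (KPlus (m + 2)) := by
  let y : Fin (m + 2) → ℝ := fun v => if (v : ℕ) < m + 1 then 1 else 0
  have hyy : y ⬝ᵥ y = m + 1 := by
    simp [y, dotProduct, Fin.sum_univ_castSucc (n := m + 1), Fin.is_le]
  have hyQy : y ⬝ᵥ (signlessLap (KPlus (m + 2)) *ᵥ y) = 2 * (m + 1) * m + 1 := by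
    rw [dotProduct_signlessLap_mulVec]
    simp only [Fin.sum_univ_castSucc (n := m + 1)]
    simp [y, KPlus, Fin.is_le, (Fin.castSucc_ne_last _).symm, sum_ite, filter_ne, sum_add_distrib]
    ring
  have h := dotProduct_mulVec_le_lamMax (posSemidef_signlessLap (KPlus (m + 2))).isHermitian y
  rw [hyQy, hyy] at h
  unfold q1
  nlinarith

lemma qmin_KPlus_le_one : qmin (KPlus (m + 2)) ≤ 1 := by
  let e : Fin (m + 2) → ℝ := Pi.single (Fin.last (m + 1)) 1
  have h := lamMin_mul_le_dotProduct_mulVec (posSemidef_signlessLap (KPlus (m + 2))).isHermitian e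
  have hee : e ⬝ᵥ e = 1 := by simp [e]
  have heQe : e ⬝ᵥ (signlessLap (KPlus (m + 2)) *ᵥ e) = 1 := by
    rw [dotProduct_signlessLap_mulVec]
    simp [e, Fin.sum_univ_castSucc (n := m + 1), KPlus, (Fin.castSucc_ne_last _).symm]
  rw [hee, heQe, mul_one] at h
  exact h

lemma two_mul_sub_five_le_sQ_KPlus {n : ℕ} (hn : 2 ≤ n) : 2 * (n : ℝ) - 5 ≤ sQ (KPlus n) := by
  obtain ⟨m, rfl⟩ := Nat.exists_eq_add_of_le' hn
  have h1 := two_mul_le_q1_KPlus m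
  have h2 := qmin_KPlus_le_one m
  rw [sQ]
  push_cast
  linarith

end KPlus

lemma two_mul_sub_five_le_q1 {n : ℕ} (hn : 2 ≤ n) {G : SimpleGraph (Fin n)}
    (hmax : ∀ H : SimpleGraph (Fin n), H.Connected → sQ H ≤ sQ G) :
    2 * (n : ℝ) - 5 ≤ q1 G := by
  have : NeZero n := ⟨by omega⟩
  have hspread := (two_mul_sub_five_le_sQ_KPlus hn).trans (hmax _ KPlus_connected)
  linarith [qmin_nonneg G, show sQ G = q1 G - qmin G from rfl]

lemma sq_mul_sq_le_of_signlessLap_mulVec_eq {n : ℕ} {G : SimpleGraph (Fin n)} {x : Fin n → ℝ}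
    {q a : ℝ} (ha : 0 ≤ a) (hq : n - 1 + a ≤ q) (hx : signlessLap G *ᵥ x = q • x)
    (hnorm : ∑ v, x v ^ 2 = 1) (v : Fin n) :
    a ^ 2 * x v ^ 2 ≤ (n - 1) * (1 - x v ^ 2) := by
  classical
  set N := G.neighborFinset v
  have hdeg : (G.degree v : ℝ) ≤ n - 1 := by
    have h := G.degree_lt_card_verts v
    rw [Fintype.card_fin] at h
    have h' : (G.degree v : ℝ) + 1 ≤ n := by exact_mod_cast h
    linarith
  have hrow : (q - G.degree v) * x v = ∑ u ∈ N, x u := by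
    have h := congrFun hx v
    rw [signlessLap_mulVec_apply, Pi.smul_apply, smul_eq_mul] at h
    linarith
  have hN : ∑ u ∈ N, x u ^ 2 ≤ 1 - x v ^ 2 := by
    have h := sum_le_sum_of_subset_of_nonneg (subset_univ (insert v N))
      fun u _ _ => sq_nonneg (x u)
    rw [sum_insert (G.notMem_neighborFinset_self v), hnorm] at h
    linarith
  calc a ^ 2 * x v ^ 2 ≤ (q - G.degree v) ^ 2 * x v ^ 2 := by gcongr; linarith
    _ = (∑ u ∈ N, x u) ^ 2 := by rw [← hrow]; ring
    _ ≤ G.degree v * ∑ u ∈ N, x u ^ 2 := sq_sum_le_card_mul_sum_sq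
    _ ≤ (n - 1) * (1 - x v ^ 2) :=
      mul_le_mul hdeg hN (sum_nonneg fun u _ => sq_nonneg (x u)) (by linarith)

lemma lt_eight_of_one_le_div_add_mul {n t : ℝ} (hn : 4 ≤ n)
    (h : 1 ≤ t / (4 * n) + (n - t) * ((n - 1) / (n ^ 2 - 7 * n + 15))) : t < 8 := by
  have hD : 0 < n ^ 2 - 7 * n + 15 := by nlinarith
  rw [mul_div_assoc', div_add_div _ _ (by positivity) hD.ne', le_div_iff₀ (by positivity)] at h
  nlinarith

lemma ncard_lt_eight_of_sq_le {n : ℕ} (hn : 4 ≤ n) {x : Fin n → ℝ} (hx0 : ∀ v, 0 ≤ x v)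
    (hnorm : ∑ v, x v ^ 2 = 1)
    (hx : ∀ v, ((n : ℝ) - 4) ^ 2 * x v ^ 2 ≤ (n - 1) * (1 - x v ^ 2)) :
    Set.ncard {v : Fin n | x v < 1 / (2 * Real.sqrt n)} < 8 := by
  have hn' : (4 : ℝ) ≤ n := by exact_mod_cast hn
  set c := 1 / (2 * Real.sqrt n)
  have hc : c ^ 2 = 1 / (4 * n) := by
    rw [div_pow, mul_pow, Real.sq_sqrt (Nat.cast_nonneg n)]
    norm_num
  set X := ((n : ℝ) - 1) / (n ^ 2 - 7 * n + 15)
  have hX : ∀ v, x v ^ 2 ≤ X := fun v => by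
    rw [le_div_iff₀ (by nlinarith)]
    nlinarith [hx v]
  rw [Set.ncard_eq_toFinset_card', Set.toFinset_ofPred]
  set t := #{v | x v < c}
  have hcompl : (#{v | ¬x v < c} : ℝ) = n - t := by
    rw [eq_sub_iff_add_eq', ← Nat.cast_add, card_filter_add_card_filter_not, card_univ,
      Fintype.card_fin]
  refine Nat.cast_lt.1 (lt_eight_of_one_le_div_add_mul hn' ?_)
  calc (1 : ℝ) = ∑ v with x v < c, x v ^ 2 + ∑ v with ¬x v < c, x v ^ 2 :=
        (hnorm ▸ sum_filter_add_sum_filter_not univ _ _).symm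
    _ ≤ t • c ^ 2 + #{v | ¬x v < c} • X := by
        gcongr
        · exact sum_le_card_nsmul _ _ _ fun v hv =>
            pow_le_pow_left₀ (hx0 v) (mem_filter.1 hv).2.le 2
        · exact sum_le_card_nsmul _ _ _ fun v _ => hX v
    _ = t / (4 * n) + (n - t) * X := by
        rw [nsmul_eq_mul, nsmul_eq_mul, hcompl, hc]
        ring

theorem stmt15 :
    ∃ N : ℕ, ∀ n : ℕ, N ≤ n →
      ∀ G : SimpleGraph (Fin n), G.Connected →
        (∀ H : SimpleGraph (Fin n), H.Connected → sQ H ≤ sQ G) →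
        ∀ x : Fin n → ℝ, (∀ v, 0 < x v) → (∑ v, x v ^ 2 = 1) →
          (signlessLap G).mulVec x = q1 G • x →
          Set.ncard {v : Fin n | x v < 1 / (2 * Real.sqrt n)} < 8 := by
  refine ⟨4, fun n hn G _ hmax x hxpos hnorm heig => ?_⟩
  have hn' : (4 : ℝ) ≤ n := by exact_mod_cast hn
  have hq := two_mul_sub_five_le_q1 (by omega) hmax
  refine ncard_lt_eight_of_sq_le hn (fun v => (hxpos v).le) hnorm fun v => ?_
  exact sq_mul_sq_le_of_signlessLap_mulVec_eq (by linarith) (by linarith) heig hnorm v
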